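/- arXiv:2110.06081 — 6 statements merged into one kernel-verified Lean document; each statement's English description precedes it below -/
import Mathlib

section
/- Let x_0 < x_1 < ⋯ < x_n be real numbers and let s_0, …, s_{n−1} be real polynomials satisfying s_{i−1}(x_i) = s_i(x_i) for i = 1, …, n−1. Set s_{−1} := 0 and define R_i(x) = s_i(ReLU(x − x_i) + x_i) − s_{i−1}(ReLU(x − x_i) + x_i) for i = 0, …, n−1. Then for every x ∈ [x_0, x_n], the sum Σ_{i=0}^{n−1} R_i(x) equals S(x), the polynomial spline with knots x_0, …, x_n and pieces s_0, …, s_{n−1}. -/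
/-!
Since `ReLU(x − a) + a = max x a`, the term `R_j(x)` is `s_j(x) − s_{j−1}(x)` when `x_j ≤ x`,
and `s_j(x_j) − s_{j−1}(x_j) = 0` when `x ≤ x_j` and `j ≥ 1`, by continuity of the spline at
`x_j`. So for `x ∈ [x_i, x_{i+1}]` the sum telescopes over `j ≤ i` to `s_i(x)` and the
terms with `j > i` vanish.
-/

/-- ReLU: the rectified linear unit. -/
noncomputable def relu (z : ℝ) : ℝ := max z 0

/-- The function `R_i(x) = s_i(ReLU(x − x_i) + x_i) − s_{i−1}(ReLU(x − x_i) + x_i)`,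
with the convention `s_{−1} = 0`. -/
noncomputable def Rpiece {n : ℕ} (knot : Fin (n + 1) → ℝ) (s : Fin n → Polynomial ℝ)
    (i : Fin n) (y : ℝ) : ℝ :=
  (s i).eval (relu (y - knot i.castSucc) + knot i.castSucc) -
    (if _ : (i : ℕ) = 0 then (0 : Polynomial ℝ)
      else s ⟨(i : ℕ) - 1, lt_of_le_of_lt (Nat.sub_le _ _) i.isLt⟩).eval
      (relu (y - knot i.castSucc) + knot i.castSucc)

open Finset Polynomial

lemma relu_sub_add (y a : ℝ) : relu (y - a) + a = max y a := by
  rw [relu, max_add, sub_add_cancel, zero_add]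

theorem Finset.sum_range_eq_sub_of_eq_sub_of_eq_zero {M : Type*} [AddCommGroup M]
    {g F : ℕ → M} {i n : ℕ} (hi : i < n) (hle : ∀ k ≤ i, g k = F (k + 1) - F k)
    (hgt : ∀ k, i < k → k < n → g k = 0) :
    ∑ k ∈ range n, g k = F (i + 1) - F 0 := by
  have htail : ∑ k ∈ Ico (i + 1) n, g k = 0 := sum_eq_zero fun k hk ↦
    hgt k (mem_Ico.mp hk).1 (mem_Ico.mp hk).2
  rw [← sum_range_add_sum_Ico _ hi, htail, add_zero, ← sum_range_sub]
  exact sum_congr rfl fun k hk ↦ hle k (Nat.lt_succ_iff.mp (mem_range.mp hk))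

noncomputable def shiftedPiece {n : ℕ} (s : Fin n → ℝ[X]) : ℕ → ℝ[X]
  | 0 => 0
  | k + 1 => if h : k < n then s ⟨k, h⟩ else 0

section Rpiece

variable {n : ℕ} (knot : Fin (n + 1) → ℝ) (s : Fin n → ℝ[X])

lemma Rpiece_eq_shiftedPiece (j : Fin n) (y : ℝ) :
    Rpiece knot s j y = (shiftedPiece s (j + 1)).eval (max y (knot j.castSucc)) -
      (shiftedPiece s j).eval (max y (knot j.castSucc)) := by
  obtain ⟨_ | k, hk⟩ := j <;> simp [Rpiece, shiftedPiece, relu_sub_add, hk, Nat.lt_of_succ_lt]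

variable {knot}

lemma Rpiece_eq_sub_of_le {j : Fin n} {y : ℝ} (hy : knot j.castSucc ≤ y) :
    Rpiece knot s j y = (shiftedPiece s (j + 1)).eval y - (shiftedPiece s j).eval y := by
  rw [Rpiece_eq_shiftedPiece, max_eq_left hy]

variable {s}

lemma Rpiece_eq_zero_of_ge
    (hmatch : ∀ i : Fin n, ∀ hi : (i : ℕ) + 1 < n,
      (s i).eval (knot i.succ) = (s ⟨(i : ℕ) + 1, hi⟩).eval (knot i.succ))
    {j : Fin n} (hj : (j : ℕ) ≠ 0) {y : ℝ} (hy : y ≤ knot j.castSucc) :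
    Rpiece knot s j y = 0 := by
  obtain ⟨_ | k, hk⟩ := j
  · exact absurd rfl hj
  · have hknot : (⟨k, by omega⟩ : Fin n).succ = Fin.castSucc ⟨k + 1, hk⟩ := rfl
    have hcont := hmatch ⟨k, by omega⟩ hk
    rw [hknot] at hcont
    rw [Rpiece_eq_shiftedPiece, max_eq_right hy]
    simp only [shiftedPiece, dif_pos hk, dif_pos (show k < n by omega)]
    exact sub_eq_zero.mpr hcont.symm

theorem sum_Rpiece_eq_eval_of_mem_Icc (hmono : Monotone knot)
    (hmatch : ∀ i : Fin n, ∀ hi : (i : ℕ) + 1 < n,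
      (s i).eval (knot i.succ) = (s ⟨(i : ℕ) + 1, hi⟩).eval (knot i.succ))
    {i : Fin n} {y : ℝ} (hy : y ∈ Set.Icc (knot i.castSucc) (knot i.succ)) :
    ∑ j, Rpiece knot s j y = (s i).eval y := by
  rw [sum_fin_eq_sum_range, sum_range_eq_sub_of_eq_sub_of_eq_zero (F := fun k ↦
    (shiftedPiece s k).eval y) i.isLt]
  · simp [shiftedPiece]
  · intro k hk
    rw [dif_pos (by omega)]
    exact Rpiece_eq_sub_of_le s (le_trans (hmono (Fin.mk_le_mk.mpr hk)) hy.1)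
  · intro k hik hkn
    rw [dif_pos hkn]
    exact Rpiece_eq_zero_of_ge hmatch (Nat.ne_zero_of_lt hik)
      (hy.2.trans (hmono (Fin.mk_le_mk.mpr hik)))

end Rpiece

/-- for knots `x_0 < ⋯ < x_n` and pieces `s_0, …, s_{n−1}` with
`s_{i−1}(x_i) = s_i(x_i)` (1 ≤ i ≤ n−1), the sum `Σ_{i=0}^{n−1} R_i(x)` equals the
polynomial spline `S(x)` for every `x ∈ [x_0, x_n]`, i.e. it equals `s_i(x)` on
`[x_i, x_{i+1})` and `s_{n−1}(x_n)` at `x_n`. -/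
theorem stmt1 (n : ℕ) (hn : 0 < n) (knot : Fin (n + 1) → ℝ) (hmono : StrictMono knot)
    (s : Fin n → Polynomial ℝ)
    (hmatch : ∀ i : Fin n, ∀ hi : (i : ℕ) + 1 < n,
      (s i).eval (knot i.succ) = (s ⟨(i : ℕ) + 1, hi⟩).eval (knot i.succ)) :
    ∀ y ∈ Set.Icc (knot 0) (knot (Fin.last n)),
      (∀ i : Fin n, y ∈ Set.Ico (knot i.castSucc) (knot i.succ) →
        ∑ j, Rpiece knot s j y = (s i).eval y) ∧
      (y = knot (Fin.last n) →
        ∑ j, Rpiece knot s j y = (s ⟨n - 1, Nat.sub_lt hn Nat.one_pos⟩).eval y) := by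
  rintro y -
  refine ⟨fun i hi ↦ sum_Rpiece_eq_eval_of_mem_Icc hmono.monotone hmatch
    (Set.Ico_subset_Icc_self hi), fun hlast ↦ ?_⟩
  have hsucc : (⟨n - 1, Nat.sub_lt hn Nat.one_pos⟩ : Fin n).succ = Fin.last n := by
    ext
    simp only [Fin.val_succ, Fin.val_last]
    omega
  rw [hlast, ← hsucc]
  exact sum_Rpiece_eq_eval_of_mem_Icc hmono.monotone hmatch
    ⟨hmono.monotone Fin.castSucc_lt_succ.le, le_rfl⟩
end

section
/- For every real polynomial p in one variable, there exist a depth H, an architecture (d_0, d_1, …, d_H) with d_0 = d_H = 1, and quadratic layers q_1, …, q_H such that the quadratic network with ReLU activation q_H ∘ σ ∘ q_{H−1} ∘ σ ∘ ⋯ ∘ σ ∘ q_1 : ℝ → ℝ equals p(x) for every x ∈ ℝ. -/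
/-- Componentwise ReLU. -/
noncomputable def reluVec {n : ℕ} (v : Fin n → ℝ) : Fin n → ℝ := fun i => max (v i) 0

/-- A quadratic layer
`q(x) = (W^r x + b^r) ⊙ (W^g x + b^g) + W^b (x ⊙ x) + c`. -/
def quadLayer {m d : ℕ} (Wr Wg Wb : Matrix (Fin d) (Fin m) ℝ)
    (br bg c : Fin d → ℝ) (x : Fin m → ℝ) : Fin d → ℝ :=
  fun i => (Wr.mulVec x i + br i) * (Wg.mulVec x i + bg i)
    + Wb.mulVec (fun j => x j * x j) i + c i

/-- Functions computed by quadratic networks with ReLU activation,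
`q_H ∘ σ ∘ q_{H−1} ∘ σ ∘ ⋯ ∘ σ ∘ q_1` (σ the componentwise ReLU). -/
inductive IsQNNReLU : {m d : ℕ} → ((Fin m → ℝ) → (Fin d → ℝ)) → Prop
  | single {m d : ℕ} (Wr Wg Wb : Matrix (Fin d) (Fin m) ℝ) (br bg c : Fin d → ℝ) :
      IsQNNReLU (quadLayer Wr Wg Wb br bg c)
  | comp {m k d : ℕ} (Wr Wg Wb : Matrix (Fin d) (Fin k) ℝ) (br bg c : Fin d → ℝ)
      {g : (Fin m → ℝ) → (Fin k → ℝ)} (hg : IsQNNReLU g) :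
      IsQNNReLU (fun x => quadLayer Wr Wg Wb br bg c (reluVec (g x)))

/-- `f : ℝ → ℝ` is computed by a quadratic network with ReLU activation
(with input and output dimensions 1). -/
def IsQNNReLUFun (f : ℝ → ℝ) : Prop :=
  ∃ g : (Fin 1 → ℝ) → (Fin 1 → ℝ), IsQNNReLU g ∧ ∀ x : ℝ, f x = g (fun _ => x) 0

/-!
Horner's scheme `p(x) = x · (p.divX)(x) + p(0)` turns `p` into a chain of steps `y ↦ x y + a`,
and a quadratic layer performs one step through its product term. To survive the ReLU in
between, each layer outputs `(x, -x, y, -y)`: since `t = σ(t) - σ(-t)`, the next layer recovers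
`x` and `y` linearly and forms `x y` as a product of two such differences.
-/

open Polynomial

lemma max_neg_zero_sub_max_zero_eq_neg {α : Type*} [AddGroup α] [LinearOrder α] [AddLeftMono α]
    (a : α) : max (-a) 0 - max a 0 = -a := by
  simpa using max_zero_sub_max_neg_zero_eq_self (-a)

def signedPair (x y : ℝ) : Fin 4 → ℝ := ![x, -x, y, -y]

lemma reluVec_signedPair (x y : ℝ) :
    reluVec (signedPair x y) = ![max x 0, max (-x) 0, max y 0, max (-y) 0] := by
  ext i
  fin_cases i <;> rfl

def IsQNNReLUState (f : ℝ → ℝ) : Prop :=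
  ∃ g : (Fin 1 → ℝ) → (Fin 4 → ℝ), IsQNNReLU g ∧ ∀ x, g (fun _ => x) = signedPair x (f x)

lemma isQNNReLUState_const (a : ℝ) : IsQNNReLUState fun _ => a := by
  refine ⟨_, .single ![![1], ![-1], ![0], ![0]] 0 0 0 ![1, 1, 0, 0] ![0, 0, a, -a], fun x => ?_⟩
  ext i
  fin_cases i <;> simp [quadLayer, signedPair, Matrix.mulVec, dotProduct]

namespace IsQNNReLUState

variable {f : ℝ → ℝ}

lemma mul_X_add (hf : IsQNNReLUState f) (a : ℝ) : IsQNNReLUState fun x => x * f x + a := by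
  obtain ⟨g, hg, hgf⟩ := hf
  refine ⟨_, .comp
    ![![1, -1, 0, 0], ![-1, 1, 0, 0], ![1, -1, 0, 0], ![-1, 1, 0, 0]]
    ![![0, 0, 0, 0], ![0, 0, 0, 0], ![0, 0, 1, -1], ![0, 0, 1, -1]]
    0 ![0, 0, 0, 0] ![1, 1, 0, 0] ![0, 0, a, -a] hg, fun x => ?_⟩
  rw [hgf, reluVec_signedPair]
  ext i
  fin_cases i <;> simp [quadLayer, signedPair, Matrix.mulVec, dotProduct, Fin.sum_univ_four,
    ← sub_eq_add_neg, neg_add_eq_sub, max_neg_zero_sub_max_zero_eq_neg]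
  ring

lemma isQNNReLUFun (hf : IsQNNReLUState f) : IsQNNReLUFun f := by
  obtain ⟨g, hg, hgf⟩ := hf
  refine ⟨_, .comp ![![0, 0, 1, -1]] 0 0 0 1 0 hg, fun x => ?_⟩
  rw [hgf, reluVec_signedPair]
  simp [quadLayer, Matrix.mulVec, dotProduct, Fin.sum_univ_four, ← sub_eq_add_neg]

end IsQNNReLUState

theorem isQNNReLUState_eval (p : ℝ[X]) : IsQNNReLUState fun x => p.eval x := by
  by_cases hp : p = 0
  · simpa [hp] using isQNNReLUState_const 0
  have horner (x : ℝ) : p.eval x = x * p.divX.eval x + p.coeff 0 := by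
    conv_lhs => rw [← divX_mul_X_add p]
    rw [eval_add, eval_mul, eval_X, eval_C, mul_comm]
  have := degree_divX_lt hp
  simpa only [horner] using (isQNNReLUState_eval p.divX).mul_X_add (p.coeff 0)
termination_by p.degree

/-- every real univariate polynomial is exactly represented, on all
of ℝ, by some quadratic network with ReLU activation. -/
theorem stmt4 (p : Polynomial ℝ) :
    ∃ f : ℝ → ℝ, IsQNNReLUFun f ∧ ∀ x : ℝ, f x = p.eval x :=
  ⟨fun x => p.eval x, (isQNNReLUState_eval p).isQNNReLUFun, fun _ => rfl⟩
end

section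
/- (Universal Spline Approximation, positive part of Proposition 1.) Let S be the polynomial spline with knots x_0 < x_1 < ⋯ < x_n and pieces s_0, …, s_{n−1}. Then there exists a quadratic network with ReLU activation whose computed function Q : ℝ → ℝ satisfies Q(x) = S(x) for all x ∈ [x_0, x_n]. -/
open Polynomial

def IsQNNReLUVecFun {d : ℕ} (F : ℝ → Fin d → ℝ) : Prop :=
  ∃ g : (Fin 1 → ℝ) → (Fin d → ℝ), IsQNNReLU g ∧ ∀ x, g (fun _ => x) = F x

theorem quadLayer_append_neg {m d : ℕ} (Wr Wg Wb : Matrix (Fin d) (Fin m) ℝ)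
    (br bg c : Fin d → ℝ) (x : Fin m → ℝ) :
    quadLayer (.of (Fin.append (Wr ·) (-Wr ·))) (.of (Fin.append (Wg ·) (Wg ·)))
        (.of (Fin.append (Wb ·) (-Wb ·))) (Fin.append br (-br)) (Fin.append bg bg)
        (Fin.append c (-c)) x
      = Fin.append (quadLayer Wr Wg Wb br bg c x) (-quadLayer Wr Wg Wb br bg c x) := by
  ext i
  refine Fin.addCases (fun i => ?_) (fun i => ?_) i
  · simp [quadLayer, Matrix.mulVec, dotProduct]
  · simp [quadLayer, Matrix.mulVec, dotProduct, -Fin.natAdd_eq_addNat]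
    ring

theorem IsQNNReLU.append_neg {m d : ℕ} {g : (Fin m → ℝ) → Fin d → ℝ} (hg : IsQNNReLU g) :
    IsQNNReLU fun x => Fin.append (g x) (-g x) := by
  cases hg with
  | single Wr Wg Wb br bg c =>
    convert IsQNNReLU.single (.of (Fin.append (Wr ·) (-Wr ·))) (.of (Fin.append (Wg ·) (Wg ·)))
      (.of (Fin.append (Wb ·) (-Wb ·))) (Fin.append br (-br)) (Fin.append bg bg)
      (Fin.append c (-c)) using 1
    exact (funext (quadLayer_append_neg Wr Wg Wb br bg c)).symm
  | comp Wr Wg Wb br bg c hg =>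
    simpa only [quadLayer_append_neg] using
      IsQNNReLU.comp (.of (Fin.append (Wr ·) (-Wr ·))) (.of (Fin.append (Wg ·) (Wg ·)))
        (.of (Fin.append (Wb ·) (-Wb ·))) (Fin.append br (-br)) (Fin.append bg bg)
        (Fin.append c (-c)) hg

theorem reluVec_append {k l : ℕ} (u : Fin k → ℝ) (w : Fin l → ℝ) :
    reluVec (Fin.append u w) = Fin.append (reluVec u) (reluVec w) := by
  ext i
  refine Fin.addCases (fun i => ?_) (fun i => ?_) i <;> simp [reluVec]

theorem reluVec_sub_reluVec_neg {d : ℕ} (v : Fin d → ℝ) : reluVec v - reluVec (-v) = v := by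
  ext i
  exact max_zero_sub_max_neg_zero_eq_self (v i)

namespace IsQNNReLUVecFun

variable {k d : ℕ} {F : ℝ → Fin k → ℝ}

theorem layer (hF : IsQNNReLUVecFun F) (A B A' B' : (Fin k → ℝ) →ₗ[ℝ] Fin d → ℝ)
    (b b' c : Fin d → ℝ) :
    IsQNNReLUVecFun fun x =>
      (A (reluVec (F x)) + B (F x) + b) * (A' (reluVec (F x)) + B' (F x) + b') + c := by
  obtain ⟨g, hg, hgF⟩ := hF
  -- `B v = B (σ v) - B (σ (-v))`, so a layer reading `σ (v, -v)` sees `v` itself as well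
  let L (A B : (Fin k → ℝ) →ₗ[ℝ] Fin d → ℝ) : (Fin (k + k) → ℝ) →ₗ[ℝ] Fin d → ℝ :=
    (A + B) ∘ₗ LinearMap.funLeft ℝ ℝ (Fin.castAdd k) - B ∘ₗ LinearMap.funLeft ℝ ℝ (Fin.natAdd k)
  have hL : ∀ A B v, L A B (reluVec (Fin.append v (-v))) = A (reluVec v) + B v := by
    intro A B v
    have hv₁ : LinearMap.funLeft ℝ ℝ (Fin.castAdd k) (Fin.append (reluVec v) (reluVec (-v)))
        = reluVec v := funext (Fin.append_left _ _)
    have hv₂ : LinearMap.funLeft ℝ ℝ (Fin.natAdd k) (Fin.append (reluVec v) (reluVec (-v)))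
        = reluVec (-v) := funext (Fin.append_right _ _)
    simp only [L, reluVec_append, LinearMap.sub_apply, LinearMap.comp_apply, LinearMap.add_apply,
      hv₁, hv₂]
    rw [add_sub_assoc, ← map_sub, reluVec_sub_reluVec_neg]
  refine ⟨_, hg.append_neg.comp (LinearMap.toMatrix' (L A B)) (LinearMap.toMatrix' (L A' B')) 0
    b b' c, fun x => ?_⟩
  ext i
  simp [quadLayer, LinearMap.toMatrix'_mulVec, hL, hgF]

theorem quad (hF : IsQNNReLUVecFun F) (A A' : (Fin k → ℝ) →ₗ[ℝ] Fin d → ℝ)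
    (b b' c : Fin d → ℝ) :
    IsQNNReLUVecFun fun x => (A (F x) + b) * (A' (F x) + b') + c := by
  simpa using hF.layer 0 A 0 A' b b' c

end IsQNNReLUVecFun

theorem isQNNReLUVecFun_affine {d : ℕ} (a b : Fin d → ℝ) :
    IsQNNReLUVecFun fun x => x • a + b := by
  refine ⟨_, IsQNNReLU.single (Matrix.of fun i _ => a i) 0 0 b 1 0, fun x => ?_⟩
  ext i
  simp [quadLayer, Matrix.mulVec, dotProduct, mul_comm]

theorem isQNNReLUVecFun_eval {d : ℕ} (R : Fin d → ℝ[X]) :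
    IsQNNReLUVecFun fun x k => (R k).eval x := by
  obtain ⟨D, hD, hRD⟩ : ∃ D, 1 ≤ D ∧ ∀ k, (R k).natDegree ≤ D :=
    ⟨max 1 (Finset.univ.sup fun k => (R k).natDegree), le_max_left _ _, fun k =>
      le_max_of_le_right (Finset.le_sup (f := fun k => (R k).natDegree) (Finset.mem_univ k))⟩
  induction D, hD using Nat.le_induction generalizing d with
  | base =>
    convert isQNNReLUVecFun_affine (fun k => (R k).coeff 1) (fun k => (R k).coeff 0)
      using 3 with x k
    conv_lhs => rw [eq_X_add_C_of_natDegree_le_one (hRD k)]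
    simp only [eval_add, eval_mul, eval_C, eval_X, Pi.add_apply, Pi.smul_apply, smul_eq_mul]
    ring
  | succ D hD ih =>
    -- `X` rides along in coordinate `0` to supply the factor `x` of each Horner step
    have hF := ih (Fin.cons X fun k => (R k).divX) fun k => by
      refine Fin.cases ?_ (fun k => ?_) k
      · simpa using hD
      · simp only [Fin.cons_succ, natDegree_divX_eq_natDegree_tsub_one]
        have := hRD k
        omega
    convert hF.quad (LinearMap.funLeft ℝ ℝ Fin.succ) (LinearMap.pi fun _ => LinearMap.proj 0) 0 0
      (fun k => (R k).coeff 0) using 3 with x k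
    conv_lhs => rw [← divX_mul_X_add (R k)]
    simp

theorem isQNNReLUFun_add_sum_max_sub_mul {d : ℕ} (c : ℝ) (a : Fin d → ℝ) (P : Fin d → ℝ[X]) :
    IsQNNReLUFun fun x => c + ∑ i, max (x - a i) 0 * (P i).eval x := by
  have hF := isQNNReLUVecFun_eval (Fin.append (fun i => X - C (a i)) P)
  have hW := hF.layer (LinearMap.funLeft ℝ ℝ (Fin.castAdd d)) 0 0
    (LinearMap.funLeft ℝ ℝ (Fin.natAdd d)) 0 0 0
  obtain ⟨g, hg, hgW⟩ := hW.quad (LinearMap.pi fun _ : Fin 1 => ∑ i, LinearMap.proj i) 0 0 1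
    (fun _ => c)
  refine ⟨g, hg, fun x => ?_⟩
  simp [hgW, reluVec, add_comm, -Fin.natAdd_eq_addNat]

theorem max_sub_mul_eval_divByMonic {p : ℝ[X]} {a : ℝ} (hp : p.IsRoot a) (y : ℝ) :
    max (y - a) 0 * (p /ₘ (X - C a)).eval y = if a ≤ y then p.eval y else 0 := by
  have h := congrArg (eval y) (mul_divByMonic_eq_iff_isRoot.2 hp)
  rw [eval_mul, eval_sub, eval_X, eval_C] at h
  split_ifs with hay
  · rwa [max_eq_left (sub_nonneg.2 hay)]
  · rw [max_eq_right (by linarith), zero_mul]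

theorem Finset.sum_range_ite_sub {M : Type*} [AddCommGroup M] (f : ℕ → M) {P : ℕ → Prop}
    [DecidablePred P] {N i : ℕ} (hi : i < N) (hP : ∀ j < N, P j ↔ j ≤ i) :
    ∑ j ∈ Finset.range N, (if P j then f (j + 1) - f j else 0) = f (i + 1) - f 0 := by
  rw [Finset.sum_ite, Finset.sum_const_zero, add_zero, ← Finset.sum_range_sub]
  congr 1
  ext j
  simp only [Finset.mem_filter, Finset.mem_range]
  constructor
  · rintro ⟨hj, hPj⟩
    exact Nat.lt_succ_of_le ((hP j hj).1 hPj)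
  · intro hj
    exact ⟨by omega, (hP j (by omega)).2 (Nat.le_of_lt_succ hj)⟩

theorem eval_eq_add_sum_max_sub_mul_divByMonic {p : ℕ → ℝ[X]} {t : ℕ → ℝ} (ht : Monotone t)
    {N i : ℕ} (hi : i < N) (hroot : ∀ j < N, (p (j + 1)).eval (t j) = (p j).eval (t j))
    {y : ℝ} (hiy : t i ≤ y) (hyi : i + 1 < N → y < t (i + 1)) :
    (p (i + 1)).eval y
      = (p 0).eval y +
        ∑ j ∈ Finset.range N, max (y - t j) 0 * ((p (j + 1) - p j) /ₘ (X - C (t j))).eval y := by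
  have hP : ∀ j < N, t j ≤ y ↔ j ≤ i := fun j hj =>
    ⟨fun hjy => not_lt.1 fun hij => (hyi (by omega)).not_ge ((ht hij).trans hjy),
      fun hji => (ht hji).trans hiy⟩
  rw [Finset.sum_congr rfl fun j hj => max_sub_mul_eval_divByMonic
    (by simp [hroot j (Finset.mem_range.1 hj)]) y]
  simp only [eval_sub]
  rw [Finset.sum_range_ite_sub (fun j => (p j).eval y) hi hP]
  abel

theorem exists_isQNNReLUFun_eq_eval {p : ℕ → ℝ[X]} {t : ℕ → ℝ} {c : ℝ} {N : ℕ}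
    (hp0 : p 0 = C c) (ht : Monotone t)
    (hroot : ∀ j < N, (p (j + 1)).eval (t j) = (p j).eval (t j)) :
    ∃ Q : ℝ → ℝ, IsQNNReLUFun Q ∧ ∀ i < N, ∀ y, t i ≤ y → (i + 1 < N → y < t (i + 1)) →
      Q y = (p (i + 1)).eval y := by
  refine ⟨_, isQNNReLUFun_add_sum_max_sub_mul c (fun j : Fin N => t j)
    (fun j => (p (j + 1) - p j) /ₘ (X - C (t j))), fun i hi y hiy hyi => ?_⟩
  rw [eval_eq_add_sum_max_sub_mul_divByMonic ht hi hroot hiy hyi, hp0, eval_C,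
    ← Fin.sum_univ_eq_sum_range]

/-- positive part of Proposition 1: for any polynomial spline `S`
with knots `x_0 < ⋯ < x_n` and pieces `s_0, …, s_{n−1}` (matching at the interior
knots), there is a quadratic network with ReLU activation whose computed function
`Q : ℝ → ℝ` satisfies `Q(x) = S(x)` for all `x ∈ [x_0, x_n]`, i.e. `Q = s_i` on
`[x_i, x_{i+1})` and `Q(x_n) = s_{n−1}(x_n)`. -/
theorem stmt5 (n : ℕ) (hn : 0 < n) (knot : Fin (n + 1) → ℝ) (hmono : StrictMono knot)
    (s : Fin n → Polynomial ℝ)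
    (hmatch : ∀ i : Fin n, ∀ hi : (i : ℕ) + 1 < n,
      (s i).eval (knot i.succ) = (s ⟨(i : ℕ) + 1, hi⟩).eval (knot i.succ)) :
    ∃ Q : ℝ → ℝ, IsQNNReLUFun Q ∧
      (∀ i : Fin n, ∀ y ∈ Set.Ico (knot i.castSucc) (knot i.succ),
        Q y = (s i).eval y) ∧
      Q (knot (Fin.last n))
        = (s ⟨n - 1, Nat.sub_lt hn Nat.one_pos⟩).eval (knot (Fin.last n)) := by
  -- the pieces preceded by the constant `s₀(x₀)`, so that every piece, the first included,
  -- is reached from its predecessor by a jump vanishing at its left knot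
  let p : ℕ → ℝ[X]
    | 0 => C ((s ⟨0, hn⟩).eval (knot 0))
    | j + 1 => if h : j < n then s ⟨j, h⟩ else 0
  let t (j : ℕ) : ℝ := knot (Fin.clamp j n)
  have ht : Monotone t := hmono.monotone.comp fun a b hab => min_le_min_right n hab
  have ht_val (j : ℕ) (hj : j ≤ n) : t j = knot ⟨j, Nat.lt_succ_of_le hj⟩ :=
    congrArg knot (Fin.ext (min_eq_left hj))
  have hroot : ∀ j < n, (p (j + 1)).eval (t j) = (p j).eval (t j) := by
    rintro (_ | j) hj
    · simp [p, hn, ht_val 0 hn.le]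
    · simpa [p, hj, Nat.lt_of_succ_lt hj, ht_val (j + 1) hj.le] using
        (hmatch ⟨j, Nat.lt_of_succ_lt hj⟩ hj).symm
  obtain ⟨Q, hQ, hQ_eval⟩ := exists_isQNNReLUFun_eq_eval (p := p) rfl ht hroot
  refine ⟨Q, hQ, fun i y hy => ?_, ?_⟩
  · simpa [p] using hQ_eval i i.isLt y ((ht_val i i.isLt.le).trans_le hy.1)
      fun _ => hy.2.trans_eq (ht_val (i + 1) i.isLt).symm
  · have hlast : t (n - 1) ≤ knot (Fin.last n) :=
      (ht (Nat.sub_le n 1)).trans_eq (ht_val n le_rfl)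
    rw [hQ_eval (n - 1) (by omega) _ hlast (by omega)]
    simp [p, hn]
end

section
/- (Strictness of the containment in Proposition 2, witnessed at architecture (1, 2, 1).) There exist quadratic layers q_1 : ℝ → ℝ² and q_2 : ℝ² → ℝ such that (q_2 ∘ q_1)(x) = x³ for all x ∈ ℝ; whereas for every choice of affine maps l_1 : ℝ → ℝ² and l_2 : ℝ² → ℝ, the function l_2 ∘ σ_1 ∘ l_1 (with σ_1(z) = z² componentwise) is a polynomial of degree at most 2 and in particular is not equal to the function x ↦ x³. -/
/-- An affine layer `x ↦ W x + b`. -/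
def affineLayer {m d : ℕ} (W : Matrix (Fin d) (Fin m) ℝ) (b : Fin d → ℝ)
    (x : Fin m → ℝ) : Fin d → ℝ :=
  W.mulVec x + b

/-!
A composition of quadratic layers realises `x³` as the product of the two hidden coordinates
`x` and `x²`. An affine–square–affine network, in contrast, computes a linear combination of
squares of affine functions of `x`, hence a polynomial of degree at most `2`, and a polynomial of
degree less than `3` agrees with `x³` on all of the infinite field `ℝ` only if it is `X³`.
-/

open Polynomial

theorem Polynomial.not_forall_eval_eq_pow_of_natDegree_lt {R : Type*} [CommRing R] [IsDomain R]
    [Infinite R] {p : R[X]} {n : ℕ} (h : p.natDegree < n) : ¬ ∀ x, p.eval x = x ^ n := by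
  intro hp
  have hpX : p = X ^ n := Polynomial.funext fun x => by simpa using hp x
  simp [hpX] at h

theorem exists_quadLayer_comp_eq_cube :
    ∃ (Wr₁ Wg₁ Wb₁ : Matrix (Fin 2) (Fin 1) ℝ) (br₁ bg₁ c₁ : Fin 2 → ℝ)
      (Wr₂ Wg₂ Wb₂ : Matrix (Fin 1) (Fin 2) ℝ) (br₂ bg₂ c₂ : Fin 1 → ℝ),
      ∀ x : ℝ, quadLayer Wr₂ Wg₂ Wb₂ br₂ bg₂ c₂
        (quadLayer Wr₁ Wg₁ Wb₁ br₁ bg₁ c₁ (fun _ => x)) 0 = x ^ 3 := by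
  -- `q₁ x = (x, x²)` and `q₂ y = y₀ y₁`.
  refine ⟨!![1; 0], 0, !![0; 1], 0, ![1, 0], 0, !![1, 0], !![0, 1], 0, 0, 0, 0, fun x => ?_⟩
  simp [quadLayer, Matrix.mulVec, dotProduct, Fin.sum_univ_succ]
  ring

theorem affineLayer_sq_affineLayer_eq_eval {d e : ℕ} (W₁ : Matrix (Fin d) (Fin 1) ℝ)
    (b₁ : Fin d → ℝ) (W₂ : Matrix (Fin e) (Fin d) ℝ) (b₂ : Fin e → ℝ) (k : Fin e) (x : ℝ) :
    affineLayer W₂ b₂ (fun i => (affineLayer W₁ b₁ (fun _ => x) i) ^ 2) k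
      = (∑ i, C (W₂ k i) * (C (W₁ i 0) * X + C (b₁ i)) ^ 2 + C (b₂ k)).eval x := by
  simp [affineLayer, Matrix.mulVec, dotProduct, eval_finsetSum]

theorem natDegree_sum_C_mul_linear_sq_add_C_le {R : Type*} [CommSemiring R] {d : ℕ}
    (a u v : Fin d → R) (c : R) :
    (∑ i, C (a i) * (C (u i) * X + C (v i)) ^ 2 + C c).natDegree ≤ 2 := by
  refine natDegree_add_le_of_degree_le (natDegree_sum_le_of_forall_le _ _ fun i _ => ?_)
    (by simp)
  compute_degree!

/-- strictness of the containment in Proposition 2, at architecture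
(1, 2, 1): some composition `q_2 ∘ q_1` of quadratic layers equals `x ↦ x³`,
whereas every `l_2 ∘ σ₁ ∘ l_1` (with `σ₁` componentwise squaring) is a polynomial
of degree at most 2 and in particular never equals `x ↦ x³`. -/
theorem stmt9 :
    (∃ (Wr₁ Wg₁ Wb₁ : Matrix (Fin 2) (Fin 1) ℝ) (br₁ bg₁ c₁ : Fin 2 → ℝ)
        (Wr₂ Wg₂ Wb₂ : Matrix (Fin 1) (Fin 2) ℝ) (br₂ bg₂ c₂ : Fin 1 → ℝ),
      ∀ x : ℝ,
        quadLayer Wr₂ Wg₂ Wb₂ br₂ bg₂ c₂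
          (quadLayer Wr₁ Wg₁ Wb₁ br₁ bg₁ c₁ (fun _ => x)) 0 = x ^ 3) ∧
    (∀ (W₁ : Matrix (Fin 2) (Fin 1) ℝ) (b₁ : Fin 2 → ℝ)
        (W₂ : Matrix (Fin 1) (Fin 2) ℝ) (b₂ : Fin 1 → ℝ),
      (∃ p : Polynomial ℝ, p.natDegree ≤ 2 ∧
        ∀ x : ℝ,
          affineLayer W₂ b₂ (fun i => (affineLayer W₁ b₁ (fun _ => x) i) ^ 2) 0
            = p.eval x) ∧
      ¬ (∀ x : ℝ,
          affineLayer W₂ b₂ (fun i => (affineLayer W₁ b₁ (fun _ => x) i) ^ 2) 0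
            = x ^ 3)) := by
  refine ⟨exists_quadLayer_comp_eq_cube, fun W₁ b₁ W₂ b₂ => ?_⟩
  have hdeg := natDegree_sum_C_mul_linear_sq_add_C_le (W₂ 0) (W₁ · 0) b₁ (b₂ 0)
  have heval := affineLayer_sq_affineLayer_eq_eval W₁ b₁ W₂ b₂ 0
  refine ⟨⟨_, hdeg, heval⟩, fun hcube => ?_⟩
  exact Polynomial.not_forall_eval_eq_pow_of_natDegree_lt (n := 3) (by omega)
    fun x => (heval x).symm.trans (hcube x)
end

section
/- (Lemma 3, series lemma.) Let (a_t)_{t ≥ 1} and (b_t)_{t ≥ 1} be sequences of nonnegative real numbers. Assume that the series Σ_{t=1}^∞ a_t b_t converges, that Σ_{t=1}^∞ a_t diverges, and that there exists K ≥ 0 with |b_{t+1} − b_t| ≤ K a_t for all t. Then b_t converges to 0. -/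
/-!
Since `Σ a_t = ∞` while `Σ a_t b_t < ∞`, the sequence `b` returns below any level `c > 0`
infinitely often. If `b_n ≥ ε` far out, follow `b` from `n` to its first return below `ε / 2`:
on the way `b ≥ ε / 2`, and with `L = max K 1` the drop of at least `ε / 2` costs
`Σ a_k ≥ ε / (2L)`, hence `Σ a_k b_k ≥ ε² / (4L)` over a block of the tail of a convergent series.
-/

open Filter Finset

section SeriesLemma

variable {a b : ℕ → ℝ}

theorem frequently_lt_of_summable_mul_of_not_summable (ha : ∀ t, 0 ≤ a t)
    (hconv : Summable (fun t => a t * b t)) (hdiv : ¬ Summable a) {c : ℝ} (hc : 0 < c) :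
    ∃ᶠ t in atTop, b t < c := by
  simp_rw [← not_le]
  refine not_eventually.mp fun hbc => hdiv ((summable_mul_left_iff hc.ne').mp ?_)
  refine hconv.of_norm_bounded_eventually_nat (hbc.mono fun t ht => ?_)
  rw [Real.norm_of_nonneg (mul_nonneg hc.le (ha t)), mul_comm]
  exact mul_le_mul_of_nonneg_left ht (ha t)

theorem exists_first_lt_of_frequently {c : ℝ} (h : ∃ᶠ t in atTop, b t < c) (n : ℕ) :
    ∃ m, n ≤ m ∧ b m < c ∧ ∀ k ∈ Ico n m, c ≤ b k := by
  classical
  have hex : ∃ m, n ≤ m ∧ b m < c := frequently_atTop.mp h n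
  refine ⟨Nat.find hex, (Nat.find_spec hex).1, (Nat.find_spec hex).2, fun k hk => ?_⟩
  rw [mem_Ico] at hk
  exact le_of_not_gt fun hlt => Nat.find_min hex hk.2 ⟨hk.1, hlt⟩

theorem sub_le_mul_sum_Ico_of_abs_sub_le {L : ℝ} (hbound : ∀ t, |b (t + 1) - b t| ≤ L * a t)
    {n m : ℕ} (hnm : n ≤ m) : b n - b m ≤ L * ∑ k ∈ Ico n m, a k := by
  rw [mul_sum]
  refine (le_abs_self _).trans ?_
  rw [← Real.dist_eq]
  refine dist_le_Ico_sum_of_dist_le hnm fun {k} _ _ => ?_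
  rw [Real.dist_eq, abs_sub_comm]
  exact hbound k

theorem mul_sub_le_mul_sum_Ico_mul {L c : ℝ} (hL : 0 ≤ L) (hc : 0 ≤ c) (ha : ∀ t, 0 ≤ a t)
    (hbound : ∀ t, |b (t + 1) - b t| ≤ L * a t) {n m : ℕ} (hnm : n ≤ m)
    (hbc : ∀ k ∈ Ico n m, c ≤ b k) :
    c * (b n - b m) ≤ L * ∑ k ∈ Ico n m, a k * b k :=
  calc c * (b n - b m) ≤ c * (L * ∑ k ∈ Ico n m, a k) :=
        mul_le_mul_of_nonneg_left (sub_le_mul_sum_Ico_of_abs_sub_le hbound hnm) hc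
    _ = L * ∑ k ∈ Ico n m, a k * c := by rw [mul_left_comm, mul_comm c, sum_mul]
    _ ≤ L * ∑ k ∈ Ico n m, a k * b k :=
        mul_le_mul_of_nonneg_left
          (sum_le_sum fun k hk => mul_le_mul_of_nonneg_left (hbc k hk) (ha k)) hL

end SeriesLemma

theorem Summable.exists_forall_sum_Ico_lt {f : ℕ → ℝ} (hf : Summable f) {δ : ℝ} (hδ : 0 < δ) :
    ∃ N, ∀ n ≥ N, ∀ m ≥ n, ∑ k ∈ Ico n m, f k < δ := by
  obtain ⟨N, hN⟩ := Metric.cauchySeq_iff.mp hf.hasSum.tendsto_sum_nat.cauchySeq δ hδ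
  refine ⟨N, fun n hn m hm => ?_⟩
  rw [sum_Ico_eq_sub _ hm]
  exact (le_abs_self _).trans_lt (hN m (hn.trans hm) n hn)

theorem stmt13_general (a b : ℕ → ℝ) (ha : ∀ t, 0 ≤ a t) (hb : ∀ t, 0 ≤ b t)
    (hconv : Summable (fun t => a t * b t)) (hdiv : ¬ Summable a)
    (K : ℝ) (hbound : ∀ t, |b (t + 1) - b t| ≤ K * a t) :
    Tendsto b atTop (nhds 0) := by
  set L := max K 1
  have hL : 0 < L := one_pos.trans_le (le_max_right K 1)
  have hboundL : ∀ t, |b (t + 1) - b t| ≤ L * a t := fun t =>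
    (hbound t).trans (mul_le_mul_of_nonneg_right (le_max_left K 1) (ha t))
  rw [Metric.tendsto_atTop]
  intro ε hε
  obtain ⟨N, hN⟩ := hconv.exists_forall_sum_Ico_lt (δ := ε ^ 2 / (4 * L)) (by positivity)
  refine ⟨N, fun n hn => ?_⟩
  rw [Real.dist_eq, sub_zero, abs_of_nonneg (hb n)]
  by_contra! hbn
  obtain ⟨m, hnm, hbm, hbc⟩ := exists_first_lt_of_frequently
    (frequently_lt_of_summable_mul_of_not_summable ha hconv hdiv (half_pos hε)) n
  have hdrop := mul_sub_le_mul_sum_Ico_mul hL.le (half_pos hε).le ha hboundL hnm hbc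
  have htail : L * ∑ k ∈ Ico n m, a k * b k < ε ^ 2 / 4 := by
    calc L * ∑ k ∈ Ico n m, a k * b k < L * (ε ^ 2 / (4 * L)) :=
          mul_lt_mul_of_pos_left (hN n hn m hnm) hL
      _ = ε ^ 2 / 4 := by field_simp
  nlinarith

/-- Lemma 3, series lemma: if `(a_t)` and `(b_t)` are nonnegative,
`Σ a_t b_t` converges, `Σ a_t` diverges, and `|b_{t+1} − b_t| ≤ K a_t` for some
`K ≥ 0`, then `b_t → 0`. -/
theorem stmt13 (a b : ℕ → ℝ) (ha : ∀ t, 0 ≤ a t) (hb : ∀ t, 0 ≤ b t)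
    (hconv : Summable (fun t => a t * b t)) (hdiv : ¬ Summable a)
    (K : ℝ) (hK : 0 ≤ K) (hbound : ∀ t, |b (t + 1) - b t| ≤ K * a t) :
    Tendsto b atTop (nhds 0) :=
  stmt13_general a b ha hb hconv hdiv K hbound
end

section
/- (Lemma 4, key descent estimate.) In the SGD setting below, assume additionally that L has M-Lipschitz gradient (M-smoothness) and that every diagonal entry of every η_t lies in [0, 1/M]. Then for every T ≥ 1, E[ Σ_{t=1}^T ⟨∇L(Ξ_t), η_t ∇L(Ξ_t)⟩ ] ≤ 2 ( E[L(Ξ_1) − L(Ξ_{T+1})] + (M S²/2) Σ_{t=1}^T ‖η_t‖² ), where ‖η_t‖ is the Frobenius norm of η_t. -/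
/-!
Write `g_t = ∇L(Ξ_t) + z_t`. The descent lemma for an `M`-smooth `L`, applied to the step
`Ξ_{t+1} = Ξ_t - η_t g_t`, gives after expanding coordinatewise
`⟨∇L, η_t ∇L⟩ ≤ 2 (L(Ξ_t) - L(Ξ_{t+1})) + 2 ⟨(M η_t² - η_t) ∇L, z_t⟩ + M S² ‖η_t‖²`,
where `M η_t ≤ 1` absorbs the quadratic term in `∇L`. In the middle term an
`ℱ_{t-1}`-measurable bounded vector is paired with a noise of zero conditional mean, so it has
expectation zero; summing the expected inequalities over `t` telescopes the values of `L`.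
All integrals are finite because the iterates stay almost surely in a bounded set.
-/

open MeasureTheory Filter
open scoped RealInnerProductSpace

/-- Application of the diagonal matrix with diagonal entries `d` to a vector. -/
noncomputable def etaApply {K : ℕ} (d : Fin K → ℝ) (v : EuclideanSpace ℝ (Fin K)) :
    EuclideanSpace ℝ (Fin K) :=
  WithLp.toLp 2 (fun i => d i * v i)

/-- Frobenius norm of the diagonal matrix with diagonal entries `d`. -/
noncomputable def frobDiag {K : ℕ} (d : Fin K → ℝ) : ℝ :=
  Real.sqrt (∑ i, (d i) ^ 2)

theorem continuous_of_norm_sub_le_mul {E F : Type*} [SeminormedAddCommGroup E]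
    [SeminormedAddCommGroup F] {f : E → F} {M : ℝ} (hf : ∀ u v, ‖f u - f v‖ ≤ M * ‖u - v‖) :
    Continuous f :=
  (LipschitzWith.of_dist_le' (K := M) (by simpa only [dist_eq_norm] using hf)).continuous

section Descent

variable {E : Type*} [NormedAddCommGroup E] [InnerProductSpace ℝ E] [CompleteSpace E]

theorem le_add_inner_add_of_norm_gradient_sub_le {L : E → ℝ} (hL : Differentiable ℝ L) {M : ℝ}
    (hsmooth : ∀ u v, ‖gradient L u - gradient L v‖ ≤ M * ‖u - v‖) (x v : E) :
    L (x + v) ≤ L x + ⟪gradient L x, v⟫ + M / 2 * ‖v‖ ^ 2 := by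
  have hline (s : ℝ) :
      HasDerivAt (fun s : ℝ => L (x + s • v)) ⟪gradient L (x + s • v), v⟫ s := by
    have hv : HasDerivAt (fun s : ℝ => x + s • v) v s := by
      simpa using ((hasDerivAt_id s).smul_const v).const_add x
    rw [inner_gradient_left]
    exact (hL _).hasFDerivAt.comp_hasDerivAt_of_eq s hv rfl
  have hbound (s : ℝ) :
      HasDerivAt (fun s : ℝ => L x + s * ⟪gradient L x, v⟫ + M / 2 * ‖v‖ ^ 2 * s ^ 2)
        (⟪gradient L x, v⟫ + M * ‖v‖ ^ 2 * s) s := by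
    refine ((((hasDerivAt_id s).mul_const _).const_add (L x)).add
      ((hasDerivAt_pow 2 s).const_mul (M / 2 * ‖v‖ ^ 2))).congr_deriv ?_
    simp only [one_mul, Nat.cast_ofNat, Nat.add_one_sub_one, pow_one]
    ring
  have hslope (s : ℝ) (hs : 0 ≤ s) :
      ⟪gradient L (x + s • v), v⟫ ≤ ⟪gradient L x, v⟫ + M * ‖v‖ ^ 2 * s := by
    have hcs := real_inner_le_norm (gradient L (x + s • v) - gradient L x) v
    have hlip := hsmooth (x + s • v) x
    rw [add_sub_cancel_left, norm_smul, Real.norm_of_nonneg hs] at hlip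
    rw [inner_sub_left] at hcs
    nlinarith [norm_nonneg v]
  simpa using image_le_of_deriv_right_le_deriv_boundary (a := 0) (b := 1)
    (fun s _ => (hline s).continuousAt.continuousWithinAt) (fun s _ => (hline s).hasDerivWithinAt)
    (by simp) (fun s _ => (hbound s).continuousAt.continuousWithinAt)
    (fun s _ => (hbound s).hasDerivWithinAt) (fun s hs => hslope s hs.1) (x := 1) (by simp)

end Descent

section Diagonal

variable {K : ℕ}

theorem sq_apply_le_norm_sq {ι : Type*} [Fintype ι] (v : EuclideanSpace ℝ ι) (i : ι) :
    v i ^ 2 ≤ ‖v‖ ^ 2 := by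
  simpa only [Real.norm_eq_abs, sq_abs] using
    pow_le_pow_left₀ (norm_nonneg _) (PiLp.norm_apply_le v i) 2

theorem inner_etaApply (d : Fin K → ℝ) (u v : EuclideanSpace ℝ (Fin K)) :
    ⟪u, etaApply d v⟫ = ∑ i, d i * u i * v i := by
  simp only [PiLp.inner_apply, RCLike.inner_apply, conj_trivial, etaApply]
  exact Finset.sum_congr rfl fun i _ => by ring

theorem frobDiag_sq (d : Fin K → ℝ) : frobDiag d ^ 2 = ∑ i, d i ^ 2 :=
  Real.sq_sqrt (Finset.sum_nonneg fun i _ => sq_nonneg (d i))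

theorem norm_etaApply_le (d : Fin K → ℝ) (v : EuclideanSpace ℝ (Fin K)) :
    ‖etaApply d v‖ ≤ frobDiag d * ‖v‖ := by
  refine (pow_le_pow_iff_left₀ (norm_nonneg _) (by unfold frobDiag; positivity)
    two_ne_zero).1 ?_
  rw [mul_pow, frobDiag_sq, EuclideanSpace.real_norm_sq_eq, Finset.sum_mul]
  refine Finset.sum_le_sum fun i _ => ?_
  rw [etaApply, PiLp.toLp_apply, mul_pow]
  exact mul_le_mul_of_nonneg_left (sq_apply_le_norm_sq v i) (sq_nonneg _)

theorem continuous_etaApply (d : Fin K → ℝ) : Continuous (etaApply d) := by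
  unfold etaApply; fun_prop

end Diagonal

theorem inner_gradient_etaApply_le {K : ℕ} {L : EuclideanSpace ℝ (Fin K) → ℝ}
    (hL : Differentiable ℝ L) {M : ℝ} (hM : 0 ≤ M)
    (hsmooth : ∀ u v, ‖gradient L u - gradient L v‖ ≤ M * ‖u - v‖)
    {d : Fin K → ℝ} (hd0 : ∀ i, 0 ≤ d i) (hdM : ∀ i, M * d i ≤ 1) {S : ℝ}
    {x g : EuclideanSpace ℝ (Fin K)} (hg : ‖g - gradient L x‖ ≤ S) :
    ⟪gradient L x, etaApply d (gradient L x)⟫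
      ≤ 2 * (L x - L (x - etaApply d g))
        + 2 * ⟪etaApply (fun i => M * d i ^ 2 - d i) (gradient L x), g - gradient L x⟫
        + M * S ^ 2 * frobDiag d ^ 2 := by
  have hdesc := le_add_inner_add_of_norm_gradient_sub_le hL hsmooth x (-etaApply d g)
  rw [← sub_eq_add_neg, inner_neg_right, norm_neg, inner_etaApply,
    EuclideanSpace.real_norm_sq_eq] at hdesc
  set a := gradient L x
  have hnoise (i : Fin K) : (g i - a i) ^ 2 ≤ S ^ 2 := by
    simpa using (sq_apply_le_norm_sq (g - a) i).trans (pow_le_pow_left₀ (norm_nonneg _) hg 2)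
  have hterm (i : Fin K) : d i * a i * a i
      ≤ 2 * (d i * a i * g i) - M * (etaApply d g i) ^ 2
        + 2 * ((M * d i ^ 2 - d i) * (g i - a i) * a i) + M * S ^ 2 * d i ^ 2 := by
    have hdd : M * d i ^ 2 ≤ d i := by nlinarith [hd0 i, hdM i]
    rw [show etaApply d g i = d i * g i from rfl]
    nlinarith [mul_nonneg (sub_nonneg.2 hdd) (sq_nonneg (a i)),
      mul_nonneg (mul_nonneg hM (sq_nonneg (d i))) (sub_nonneg.2 (hnoise i))]
  have hsum := Finset.sum_le_sum fun i (_ : i ∈ Finset.univ) => hterm i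
  simp only [Finset.sum_add_distrib, Finset.sum_sub_distrib, ← Finset.mul_sum] at hsum
  rw [inner_etaApply, real_inner_comm, inner_etaApply, frobDiag_sq]
  simp only [PiLp.sub_apply]
  linarith

section Expectation

variable {Ω : Type*} {m m0 : MeasurableSpace Ω} {P : Measure Ω}

theorem exists_ae_norm_comp_le {E F : Type*} [NormedAddCommGroup E] [ProperSpace E]
    [NormedAddCommGroup F] {f : E → F} (hf : Continuous f) {X : Ω → E} {C : ℝ}
    (hX : ∀ᵐ ω ∂P, ‖X ω‖ ≤ C) : ∃ B, ∀ᵐ ω ∂P, ‖f (X ω)‖ ≤ B := by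
  obtain ⟨B, hB⟩ := (isCompact_closedBall (0 : E) C).exists_bound_of_continuousOn hf.continuousOn
  exact ⟨B, hX.mono fun ω h => hB _ (mem_closedBall_zero_iff.2 h)⟩

theorem integrable_comp_of_ae_norm_le [IsFiniteMeasure P] {E F : Type*} [NormedAddCommGroup E]
    [ProperSpace E] [NormedAddCommGroup F] {f : E → F} (hf : Continuous f) {X : Ω → E} {C : ℝ}
    (hXm : AEStronglyMeasurable X P) (hX : ∀ᵐ ω ∂P, ‖X ω‖ ≤ C) :
    Integrable (fun ω => f (X ω)) P := by
  obtain ⟨B, hB⟩ := exists_ae_norm_comp_le hf hX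
  exact .of_bound (hf.comp_aestronglyMeasurable hXm) B hB

theorem condExp_sub_ae_eq_zero_of_condExp_ae_eq {E : Type*} [NormedAddCommGroup E]
    [NormedSpace ℝ E] [CompleteSpace E] (hm : m ≤ m0) [SigmaFinite (P.trim hm)] {f g : Ω → E}
    (hf : StronglyMeasurable[m] f) (hfi : Integrable f P) (hgi : Integrable g P)
    (hgf : P[g | m] =ᵐ[P] f) : P[g - f | m] =ᵐ[P] 0 := by
  filter_upwards [condExp_sub hgi hfi m, hgf] with ω hsub hω
  simp [hsub, hω, condExp_of_stronglyMeasurable hm hf hfi]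

theorem integral_inner_eq_zero_of_condExp_ae_eq_zero {E : Type*} [NormedAddCommGroup E]
    [InnerProductSpace ℝ E] [CompleteSpace E] (hm : m ≤ m0) [SigmaFinite (P.trim hm)]
    {V Z : Ω → E} (hV : StronglyMeasurable[m] V) (hVZ : Integrable (fun ω => ⟪V ω, Z ω⟫) P)
    (hZ : Integrable Z P) (hZ0 : P[Z | m] =ᵐ[P] 0) : ∫ ω, ⟪V ω, Z ω⟫ ∂P = 0 := by
  rw [← integral_condExp hm]
  refine integral_eq_zero_of_ae ?_
  filter_upwards [condExp_bilin_of_stronglyMeasurable_left (innerSL ℝ) hV hVZ hZ, hZ0]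
    with ω hpull hω
  rw [hω, Pi.zero_apply, map_zero] at hpull
  exact hpull

end Expectation

theorem Finset.sum_Icc_sub_succ {G : Type*} [AddCommGroup G] (f : ℕ → G) {m n : ℕ}
    (hmn : m ≤ n + 1) : ∑ t ∈ Finset.Icc m n, (f t - f (t + 1)) = f m - f (n + 1) := by
  rw [← Finset.Ico_add_one_right_eq_Icc, ← neg_sub, ← Finset.sum_Ico_sub f hmn,
    ← Finset.sum_neg_distrib]
  simp only [neg_sub]

structure IsSGDProcess {K : ℕ} {Ω : Type*} {m0 : MeasurableSpace Ω} (P : Measure Ω)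
    (ℱ : Filtration ℕ m0) (L : EuclideanSpace ℝ (Fin K) → ℝ) (dvec : ℕ → Fin K → ℝ) (S : ℝ)
    (Ξ g : ℕ → Ω → EuclideanSpace ℝ (Fin K)) : Prop where
  init : ∃ x₀, Ξ 1 = fun _ => x₀
  adapted_iterate : ∀ t : ℕ, 1 ≤ t → StronglyMeasurable[ℱ (t - 1)] (Ξ t)
  adapted_direction : ∀ t : ℕ, 1 ≤ t → StronglyMeasurable[ℱ t] (g t)
  unbiased : ∀ t : ℕ, 1 ≤ t → P[g t | ℱ (t - 1)] =ᵐ[P] fun ω => gradient L (Ξ t ω)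
  noise_le : ∀ t : ℕ, 1 ≤ t → ∀ᵐ ω ∂P, ‖g t ω - gradient L (Ξ t ω)‖ ≤ S
  update : ∀ t : ℕ, 1 ≤ t → ∀ ω, Ξ (t + 1) ω = Ξ t ω - etaApply (dvec t) (g t ω)

namespace IsSGDProcess

variable {K : ℕ} {Ω : Type*} {m0 : MeasurableSpace Ω} {P : Measure Ω} {ℱ : Filtration ℕ m0}
  {L : EuclideanSpace ℝ (Fin K) → ℝ} {dvec : ℕ → Fin K → ℝ} {S : ℝ}
  {Ξ g : ℕ → Ω → EuclideanSpace ℝ (Fin K)}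

theorem exists_ae_norm_direction_le (h : IsSGDProcess P ℱ L dvec S Ξ g)
    (hgrad : Continuous (gradient L)) {t : ℕ} (ht : 1 ≤ t) {C : ℝ}
    (hC : ∀ᵐ ω ∂P, ‖Ξ t ω‖ ≤ C) : ∃ B, ∀ᵐ ω ∂P, ‖g t ω‖ ≤ B := by
  obtain ⟨G, hG⟩ := exists_ae_norm_comp_le hgrad hC
  refine ⟨G + S, ?_⟩
  filter_upwards [hG, h.noise_le t ht] with ω hgω hnoise
  linarith [norm_le_insert' (g t ω) (gradient L (Ξ t ω))]

theorem exists_ae_norm_iterate_le (h : IsSGDProcess P ℱ L dvec S Ξ g)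
    (hgrad : Continuous (gradient L)) {t : ℕ} (ht : 1 ≤ t) : ∃ C, ∀ᵐ ω ∂P, ‖Ξ t ω‖ ≤ C := by
  induction t, ht using Nat.le_induction with
  | base =>
    obtain ⟨x₀, hx₀⟩ := h.init
    exact ⟨‖x₀‖, ae_of_all _ fun ω => by rw [hx₀]⟩
  | succ t ht ih =>
    obtain ⟨C, hC⟩ := ih
    obtain ⟨B, hB⟩ := h.exists_ae_norm_direction_le hgrad ht hC
    refine ⟨C + frobDiag (dvec t) * B, ?_⟩
    filter_upwards [hC, hB] with ω hΞω hgω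
    rw [h.update t ht ω]
    calc ‖Ξ t ω - etaApply (dvec t) (g t ω)‖
        ≤ ‖Ξ t ω‖ + frobDiag (dvec t) * ‖g t ω‖ :=
          (norm_sub_le _ _).trans (by gcongr; exact norm_etaApply_le _ _)
      _ ≤ C + frobDiag (dvec t) * B := by
          gcongr
          exact Real.sqrt_nonneg _

theorem integrable_comp_iterate [IsFiniteMeasure P] (h : IsSGDProcess P ℱ L dvec S Ξ g)
    (hgrad : Continuous (gradient L)) {F : Type*} [NormedAddCommGroup F]
    {f : EuclideanSpace ℝ (Fin K) → F} (hf : Continuous f) {t : ℕ} (ht : 1 ≤ t) :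
    Integrable (fun ω => f (Ξ t ω)) P := by
  obtain ⟨C, hC⟩ := h.exists_ae_norm_iterate_le hgrad ht
  exact integrable_comp_of_ae_norm_le hf
    ((h.adapted_iterate t ht).mono (ℱ.le _)).aestronglyMeasurable hC

theorem integrable_inner_gradient_etaApply [IsFiniteMeasure P]
    (h : IsSGDProcess P ℱ L dvec S Ξ g) (hgrad : Continuous (gradient L)) (d : Fin K → ℝ)
    {t : ℕ} (ht : 1 ≤ t) :
    Integrable (fun ω => ⟪gradient L (Ξ t ω), etaApply d (gradient L (Ξ t ω))⟫) P :=
  h.integrable_comp_iterate hgrad (f := fun x => ⟪gradient L x, etaApply d (gradient L x)⟫)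
    (hgrad.inner ((continuous_etaApply d).comp hgrad)) ht

theorem integral_inner_gradient_etaApply_le [IsProbabilityMeasure P]
    (h : IsSGDProcess P ℱ L dvec S Ξ g) (hL : Differentiable ℝ L) {M : ℝ} (hM : 0 ≤ M)
    (hsmooth : ∀ u v, ‖gradient L u - gradient L v‖ ≤ M * ‖u - v‖) {t : ℕ}
    (hd0 : ∀ i, 0 ≤ dvec t i) (hdM : ∀ i, M * dvec t i ≤ 1) (ht : 1 ≤ t) :
    ∫ ω, ⟪gradient L (Ξ t ω), etaApply (dvec t) (gradient L (Ξ t ω))⟫ ∂P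
      ≤ 2 * (∫ ω, L (Ξ t ω) ∂P - ∫ ω, L (Ξ (t + 1) ω) ∂P)
        + M * S ^ 2 * frobDiag (dvec t) ^ 2 := by
  have hgrad : Continuous (gradient L) := continuous_of_norm_sub_le_mul hsmooth
  obtain ⟨C, hC⟩ := h.exists_ae_norm_iterate_le hgrad ht
  set c : Fin K → ℝ := fun i => M * dvec t i ^ 2 - dvec t i
  set V : Ω → EuclideanSpace ℝ (Fin K) := fun ω => etaApply c (gradient L (Ξ t ω))
  set Z : Ω → EuclideanSpace ℝ (Fin K) := g t - fun ω => gradient L (Ξ t ω)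
  have hgradΞ : StronglyMeasurable[ℱ (t - 1)] fun ω => gradient L (Ξ t ω) :=
    hgrad.comp_stronglyMeasurable (h.adapted_iterate t ht)
  have hgradΞint : Integrable (fun ω => gradient L (Ξ t ω)) P :=
    h.integrable_comp_iterate hgrad hgrad ht
  have hgint : Integrable (g t) P := by
    obtain ⟨B, hB⟩ := h.exists_ae_norm_direction_le hgrad ht hC
    exact .of_bound ((h.adapted_direction t ht).mono (ℱ.le _)).aestronglyMeasurable B hB
  have hZ : Integrable Z P := hgint.sub hgradΞint
  have hV : StronglyMeasurable[ℱ (t - 1)] V :=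
    (continuous_etaApply c).comp_stronglyMeasurable hgradΞ
  have hVZ : Integrable (fun ω => ⟪V ω, Z ω⟫) P := by
    obtain ⟨B, hB⟩ := exists_ae_norm_comp_le ((continuous_etaApply c).comp hgrad) hC
    exact (innerSL ℝ).integrable_of_bilin_of_bdd_left B (hV.mono (ℱ.le _)).aestronglyMeasurable
      hB hZ
  have hnoise_mean : ∫ ω, ⟪V ω, Z ω⟫ ∂P = 0 :=
    integral_inner_eq_zero_of_condExp_ae_eq_zero (ℱ.le _) hV hVZ hZ
      (condExp_sub_ae_eq_zero_of_condExp_ae_eq (ℱ.le _) hgradΞ hgradΞint hgint (h.unbiased t ht))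
  have hstep : ∀ᵐ ω ∂P, ⟪gradient L (Ξ t ω), etaApply (dvec t) (gradient L (Ξ t ω))⟫
      ≤ 2 * (L (Ξ t ω) - L (Ξ (t + 1) ω)) + 2 * ⟪V ω, Z ω⟫
        + M * S ^ 2 * frobDiag (dvec t) ^ 2 := by
    filter_upwards [h.noise_le t ht] with ω hω
    rw [h.update t ht ω]
    exact inner_gradient_etaApply_le hL hM hsmooth hd0 hdM hω
  have hLint (s : ℕ) (hs : 1 ≤ s) : Integrable (fun ω => L (Ξ s ω)) P :=
    h.integrable_comp_iterate hgrad hL.continuous hs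
  have hdescent : Integrable (fun ω => 2 * (L (Ξ t ω) - L (Ξ (t + 1) ω))) P :=
    ((hLint t ht).sub (hLint (t + 1) (by omega))).const_mul 2
  have hdescent_noise : Integrable
      (fun ω => 2 * (L (Ξ t ω) - L (Ξ (t + 1) ω)) + 2 * ⟪V ω, Z ω⟫) P :=
    hdescent.add (hVZ.const_mul 2)
  refine (integral_mono_ae (h.integrable_inner_gradient_etaApply hgrad _ ht)
    (hdescent_noise.add (integrable_const _)) hstep).trans_eq ?_
  simp only [Pi.add_apply]
  rw [integral_add hdescent_noise (integrable_const _),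
    integral_add hdescent (hVZ.const_mul 2), integral_const_mul, integral_const_mul,
    integral_sub (hLint t ht) (hLint (t + 1) (by omega)), hnoise_mean, integral_const]
  simp

end IsSGDProcess

theorem stmt15_general {K : ℕ} {Ω : Type*} {m0 : MeasurableSpace Ω}
    (P : Measure Ω) [IsProbabilityMeasure P] (ℱ : Filtration ℕ m0)
    (L : EuclideanSpace ℝ (Fin K) → ℝ) (hL : Differentiable ℝ L)
    (M : ℝ) (hM : 0 < M)
    (hsmooth : ∀ u v, ‖gradient L u - gradient L v‖ ≤ M * ‖u - v‖)
    (dvec : ℕ → Fin K → ℝ) (hdnn : ∀ t i, 0 ≤ dvec t i)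
    (hdle : ∀ t i, dvec t i ≤ 1 / M)
    (Ξ g : ℕ → Ω → EuclideanSpace ℝ (Fin K))
    (hΞ1 : ∃ x₀, Ξ 1 = fun _ => x₀)
    (hΞmeas : ∀ t : ℕ, 1 ≤ t → StronglyMeasurable[ℱ (t - 1)] (Ξ t))
    (hgmeas : ∀ t : ℕ, 1 ≤ t → StronglyMeasurable[ℱ t] (g t))
    (hunbiased : ∀ t : ℕ, 1 ≤ t →
      P[g t | ℱ (t - 1)] =ᵐ[P] fun ω => gradient L (Ξ t ω))
    (S : ℝ)
    (hnoise : ∀ t : ℕ, 1 ≤ t → ∀ᵐ ω ∂P, ‖g t ω - gradient L (Ξ t ω)‖ ≤ S)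
    (hupdate : ∀ t : ℕ, 1 ≤ t → ∀ ω, Ξ (t + 1) ω = Ξ t ω - etaApply (dvec t) (g t ω)) :
    ∀ T : ℕ, 1 ≤ T →
      ∫ ω, (∑ t ∈ Finset.Icc 1 T,
          ⟪gradient L (Ξ t ω), etaApply (dvec t) (gradient L (Ξ t ω))⟫) ∂P
        ≤ 2 * ((∫ ω, (L (Ξ 1 ω) - L (Ξ (T + 1) ω)) ∂P)
            + M * S ^ 2 / 2 * ∑ t ∈ Finset.Icc 1 T, (frobDiag (dvec t)) ^ 2) := by
  intro T _
  have hsgd : IsSGDProcess P ℱ L dvec S Ξ g := ⟨hΞ1, hΞmeas, hgmeas, hunbiased, hnoise, hupdate⟩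
  have hgrad : Continuous (gradient L) := continuous_of_norm_sub_le_mul hsmooth
  have hdM (t : ℕ) (i : Fin K) : M * dvec t i ≤ 1 := (le_div_iff₀' hM).1 (hdle t i)
  have hLint (t : ℕ) (ht : 1 ≤ t) := hsgd.integrable_comp_iterate hgrad hL.continuous ht
  rw [integral_finsetSum _ fun t ht =>
      hsgd.integrable_inner_gradient_etaApply hgrad _ (Finset.mem_Icc.1 ht).1,
    integral_sub (hLint 1 le_rfl) (hLint (T + 1) (by omega))]
  calc _ ≤ ∑ t ∈ Finset.Icc 1 T, (2 * (∫ ω, L (Ξ t ω) ∂P - ∫ ω, L (Ξ (t + 1) ω) ∂P)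
          + M * S ^ 2 * frobDiag (dvec t) ^ 2) :=
        Finset.sum_le_sum fun t ht => hsgd.integral_inner_gradient_etaApply_le hL hM.le hsmooth
          (hdnn t) (hdM t) (Finset.mem_Icc.1 ht).1
    _ = _ := by
      rw [Finset.sum_add_distrib, ← Finset.mul_sum, ← Finset.mul_sum,
        Finset.sum_Icc_sub_succ (fun t => ∫ ω, L (Ξ t ω) ∂P) (by omega)]
      ring

/-- Lemma 4, key descent estimate: in the SGD setting, if moreover
`L` is `M`-smooth and every diagonal entry of every `η_t` lies in `[0, 1/M]`, then
for every `T ≥ 1`,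
`E[Σ_{t=1}^T ⟨∇L(Ξ_t), η_t ∇L(Ξ_t)⟩] ≤ 2(E[L(Ξ_1) − L(Ξ_{T+1})] + (M S²/2) Σ_{t=1}^T ‖η_t‖²)`. -/
theorem stmt15 {K : ℕ} {Ω : Type*} {m0 : MeasurableSpace Ω}
    (P : Measure Ω) [IsProbabilityMeasure P] (ℱ : Filtration ℕ m0)
    (L : EuclideanSpace ℝ (Fin K) → ℝ) (hL : Differentiable ℝ L)
    (M : ℝ) (hM : 0 < M)
    (hsmooth : ∀ u v, ‖gradient L u - gradient L v‖ ≤ M * ‖u - v‖)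
    (dvec : ℕ → Fin K → ℝ) (hdnn : ∀ t i, 0 ≤ dvec t i)
    (hdle : ∀ t i, dvec t i ≤ 1 / M)
    (Ξ g : ℕ → Ω → EuclideanSpace ℝ (Fin K))
    (hΞ1 : ∃ x₀, Ξ 1 = fun _ => x₀)
    (hΞmeas : ∀ t : ℕ, 1 ≤ t → StronglyMeasurable[ℱ (t - 1)] (Ξ t))
    (hgmeas : ∀ t : ℕ, 1 ≤ t → StronglyMeasurable[ℱ t] (g t))
    (hunbiased : ∀ t : ℕ, 1 ≤ t →
      P[g t | ℱ (t - 1)] =ᵐ[P] fun ω => gradient L (Ξ t ω))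
    (S : ℝ) (hS : 0 ≤ S)
    (hnoise : ∀ t : ℕ, 1 ≤ t → ∀ᵐ ω ∂P, ‖g t ω - gradient L (Ξ t ω)‖ ≤ S)
    (hupdate : ∀ t : ℕ, 1 ≤ t → ∀ ω, Ξ (t + 1) ω = Ξ t ω - etaApply (dvec t) (g t ω)) :
    ∀ T : ℕ, 1 ≤ T →
      ∫ ω, (∑ t ∈ Finset.Icc 1 T,
          ⟪gradient L (Ξ t ω), etaApply (dvec t) (gradient L (Ξ t ω))⟫) ∂P
        ≤ 2 * ((∫ ω, (L (Ξ 1 ω) - L (Ξ (T + 1) ω)) ∂P)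
            + M * S ^ 2 / 2 * ∑ t ∈ Finset.Icc 1 T, (frobDiag (dvec t)) ^ 2) :=
  stmt15_general P ℱ L hL M hM hsmooth dvec hdnn hdle Ξ g hΞ1 hΞmeas hgmeas hunbiased S hnoise
    hupdate
end
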